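/- For u with B(u,u) = 1 and the matrix T = Δ·[[0, -u₃/a₁, u₂/a₁], [u₃/a₂, 0, -u₁/a₂], [-u₂/a₃, u₁/a₃, 0]], the matrix exponential exp(θT) equals I + sin(θ)·T + (1 - cos(θ))·T². -/

import Mathlib

/-!
If `T ^ 3 = -T` then `T ^ (2k+1) = (-1)^k T` and `T ^ (2k+2) = (-1)^k T ^ 2`, so the odd and
even parts of the series of `exp (θ • T)` are the sine series times `T` and `1` plus the
shifted cosine series times `T ^ 2`. For `T = Δ • K`, `K = diag(a)⁻¹ [u]ₓ`, the relation
`T ^ 3 = -T` is Cayley–Hamilton: `K` has trace `0`, determinant `0`, and sum of principal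
`2 × 2` minors `B(u,u) / (a₁ a₂ a₃) = Δ⁻²`.
-/

open NormedSpace
open scoped Nat

section Rodrigues

variable {A : Type*} [Ring A] [Algebra ℝ A] {T : A}

lemma pow_two_mul_add_one_of_pow_three_eq_neg (hT : T ^ 3 = -T) (k : ℕ) :
    T ^ (2 * k + 1) = (-1 : ℝ) ^ k • T := by
  induction k with
  | zero => simp
  | succ k ih =>
    rw [show 2 * (k + 1) + 1 = 2 + (2 * k + 1) by ring, pow_add, ih, mul_smul_comm,
      ← pow_succ, hT, pow_succ, smul_neg, mul_neg_one, neg_smul]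

lemma pow_two_mul_add_two_of_pow_three_eq_neg (hT : T ^ 3 = -T) (k : ℕ) :
    T ^ (2 * k + 2) = (-1 : ℝ) ^ k • T ^ 2 := by
  rw [pow_succ, pow_two_mul_add_one_of_pow_three_eq_neg hT, smul_mul_assoc, ← pow_two]

variable [TopologicalSpace A] [ContinuousSMul ℝ A]

lemma hasSum_odd_expSeries_of_pow_three_eq_neg (hT : T ^ 3 = -T) (θ : ℝ) :
    HasSum (fun k : ℕ ↦ ((2 * k + 1)! : ℝ)⁻¹ • (θ • T) ^ (2 * k + 1)) (Real.sin θ • T) := by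
  convert (Real.hasSum_sin θ).smul_const T using 1
  ext k
  rw [smul_pow, pow_two_mul_add_one_of_pow_three_eq_neg hT, smul_smul, smul_smul]
  ring_nf

lemma hasSum_even_expSeries_of_pow_three_eq_neg [IsTopologicalAddGroup A] (hT : T ^ 3 = -T)
    (θ : ℝ) :
    HasSum (fun k : ℕ ↦ ((2 * k)! : ℝ)⁻¹ • (θ • T) ^ (2 * k))
      (1 + (1 - Real.cos θ) • T ^ 2) := by
  have hcos : HasSum (fun k : ℕ ↦ (-1) ^ (k + 1) * θ ^ (2 * (k + 1)) / (2 * (k + 1))! : ℕ → ℝ)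
      (Real.cos θ - 1) := by
    simpa using (hasSum_nat_add_iff' 1).mpr (Real.hasSum_cos θ)
  have htail : HasSum (fun k : ℕ ↦ ((2 * (k + 1))! : ℝ)⁻¹ • (θ • T) ^ (2 * (k + 1)))
      ((1 - Real.cos θ) • T ^ 2) := by
    have h := hcos.neg.smul_const (T ^ 2)
    rw [neg_sub] at h
    convert h using 1
    ext k
    rw [smul_pow, mul_add_one, pow_two_mul_add_two_of_pow_three_eq_neg hT, smul_smul, smul_smul]
    congr 1
    ring
  simpa using htail.zero_add (f := fun k : ℕ ↦ ((2 * k)! : ℝ)⁻¹ • (θ • T) ^ (2 * k))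

theorem exp_smul_eq_of_pow_three_eq_neg [IsTopologicalRing A] [T2Space A] (hT : T ^ 3 = -T)
    (θ : ℝ) :
    exp (θ • T) = 1 + Real.sin θ • T + (1 - Real.cos θ) • T ^ 2 := by
  have h := HasSum.even_add_odd (f := fun n : ℕ ↦ (n ! : ℝ)⁻¹ • (θ • T) ^ n)
    (hasSum_even_expSeries_of_pow_three_eq_neg hT θ)
    (hasSum_odd_expSeries_of_pow_three_eq_neg hT θ)
  exact (congrFun (exp_eq_tsum ℝ) _).trans (h.tsum_eq.trans (by abel))

end Rodrigues

noncomputable def weightedCrossMatrix (a₁ a₂ a₃ : ℝ) (u : Fin 3 → ℝ) :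
    Matrix (Fin 3) (Fin 3) ℝ :=
  !![0, -u 2 / a₁, u 1 / a₁;
     u 2 / a₂, 0, -u 0 / a₂;
     -u 1 / a₃, u 0 / a₃, 0]

lemma smul_weightedCrossMatrix_pow_three {a₁ a₂ a₃ : ℝ} (h₁ : a₁ ≠ 0) (h₂ : a₂ ≠ 0)
    (h₃ : a₃ ≠ 0) (u : Fin 3 → ℝ) :
    (a₁ * a₂ * a₃) • weightedCrossMatrix a₁ a₂ a₃ u ^ 3 =
      -(a₁ * u 0 ^ 2 + a₂ * u 1 ^ 2 + a₃ * u 2 ^ 2) • weightedCrossMatrix a₁ a₂ a₃ u := by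
  rw [pow_three, weightedCrossMatrix, Matrix.mul_fin_three, Matrix.mul_fin_three,
    Matrix.smul_of, Matrix.smul_of]
  ext i j
  fin_cases i <;> fin_cases j <;> simp [-mul_eq_zero] <;> field

theorem stmt_6 (a₁ a₂ a₃ : ℝ) (h₁ : 0 < a₁) (h₂ : 0 < a₂) (h₃ : 0 < a₃)
    (Δ : ℝ) (hΔ : Δ = Real.sqrt (a₁ * a₂ * a₃))
    (u : Fin 3 → ℝ)
    (T : Matrix (Fin 3) (Fin 3) ℝ)
    (hT : T = Δ • !![0, -u 2 / a₁, u 1 / a₁;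
                     u 2 / a₂, 0, -u 0 / a₂;
                     -u 1 / a₃, u 0 / a₃, 0])
    (hu : a₁ * u 0 ^ 2 + a₂ * u 1 ^ 2 + a₃ * u 2 ^ 2 = 1) (θ : ℝ) :
    NormedSpace.exp (θ • T) = 1 + Real.sin θ • T + (1 - Real.cos θ) • T ^ 2 := by
  obtain rfl : T = Δ • weightedCrossMatrix a₁ a₂ a₃ u := hT
  have hΔ3 : Δ ^ 3 = Δ * (a₁ * a₂ * a₃) := by
    rw [hΔ, pow_succ, Real.sq_sqrt (by positivity), mul_comm]
  refine exp_smul_eq_of_pow_three_eq_neg ?_ θ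
  rw [smul_pow, hΔ3, mul_smul, smul_weightedCrossMatrix_pow_three h₁.ne' h₂.ne' h₃.ne', hu,
    neg_one_smul, smul_neg]
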